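/- arXiv:1403.5945 — 3 statements merged into one kernel-verified Lean document; each statement's English description precedes it below -/
import Mathlib

section
/- Let A_k = {0 = a₀ < ⋯ < a_k} be a restricted basis with range n = 2a_k, let 0 < i < k−1, and set B_j = a_k − {a_{i+1}, …, a_k} with j = k−1−i. Then the prefix A_i = {a₀,…,a_i} satisfies n₂(A_i) ≥ a_{i+1} − 1, and B_j satisfies n₂(B_j) ≥ (a_k − a_i) − 1. -/
open Pointwise

/-- `n2 S` is the largest `m` such that every integer in `[0, m]` is a sum of two
elements of `S`. -/
noncomputable def n2 (S : Finset ℕ) : ℕ := sSup {m | Finset.Icc 0 m ⊆ S + S}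

/-!
Representations of small numbers only use small summands: if `x ≤ m` is `u + v` with
`u, v ∈ A_k`, then `u, v ≤ m`, so for `m < a_{i+1}` both lie in `A_i`. The suffix bound is the
same argument after the reflection `x ↦ a_k - x`, which maps `A_k + A_k ⊇ [0, 2a_k]` to
`(a_k - A_k) + (a_k - A_k) ⊇ [0, 2a_k]`, and the elements of `a_k - A_k` below `a_k - a_i` are
exactly those of `B_j`.
-/

open Finset

lemma le_n2 {S : Finset ℕ} {m : ℕ} (h : Icc 0 m ⊆ S + S) : m ≤ n2 S := by
  refine le_csSup ⟨2 * S.sup id, fun b hb => ?_⟩ h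
  obtain ⟨x, hx, y, hy, hxy⟩ := mem_add.mp (hb (right_mem_Icc.mpr b.zero_le))
  have := le_sup (f := id) hx
  have := le_sup (f := id) hy
  simp only [id] at *
  omega

lemma le_n2_of_subset_add {S T : Finset ℕ} {m : ℕ} (h : Icc 0 m ⊆ S + S)
    (hST : ∀ x ∈ S, x ≤ m → x ∈ T) : m ≤ n2 T := by
  refine le_n2 fun x hx => ?_
  have hxm := (mem_Icc.mp hx).2
  obtain ⟨u, hu, v, hv, rfl⟩ := mem_add.mp (h hx)
  exact add_mem_add (hST u hu (by omega)) (hST v hv (by omega))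

lemma Icc_subset_add_image_tsub {S : Finset ℕ} {M : ℕ} (hS : ∀ x ∈ S, x ≤ M)
    (h : Icc 0 (2 * M) ⊆ S + S) :
    Icc 0 (2 * M) ⊆ S.image (M - ·) + S.image (M - ·) := by
  intro x hx
  have hx2M := (mem_Icc.mp hx).2
  obtain ⟨u, hu, v, hv, huv⟩ := mem_add.mp (h (mem_Icc.mpr ⟨(2 * M - x).zero_le, tsub_le_self⟩))
  have := hS u hu
  have := hS v hv
  refine mem_add.mpr ⟨M - u, mem_image_of_mem _ hu, M - v, mem_image_of_mem _ hv, ?_⟩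
  omega

theorem prefix_suffix_range_bounds_general (k : ℕ) (a : ℕ → ℕ)
    (hmono : ∀ m < k, a m < a (m + 1))
    (hrest : Finset.Icc 0 (2 * a k) ⊆
      ((Finset.range (k + 1)).image a) + ((Finset.range (k + 1)).image a))
    (i : ℕ) (hik : i < k - 1) :
    a (i + 1) - 1 ≤ n2 ((Finset.range (i + 1)).image a) ∧
    (a k - a i) - 1 ≤ n2 (((Finset.Icc (i + 1) k).image a).image (fun x => a k - x)) := by
  have ha : StrictMonoOn a (Set.Iic k) := strictMonoOn_Iic_of_lt_succ hmono
  have hlt {r s : ℕ} (hr : r ≤ k) (hs : s ≤ k) : a r < a s ↔ r < s :=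
    ha.lt_iff_lt (Set.mem_Iic.mpr hr) (Set.mem_Iic.mpr hs)
  have hle_ak : ∀ x ∈ (range (k + 1)).image a, x ≤ a k := by
    simp only [mem_image, mem_range]
    rintro _ ⟨r, hr, rfl⟩
    exact ha.monotoneOn (Set.mem_Iic.mpr (by omega)) (Set.mem_Iic.mpr le_rfl) (by omega)
  have hai_ak : a i < a k := (hlt (by omega) le_rfl).mpr (by omega)
  constructor
  · refine le_n2_of_subset_add ((Icc_subset_Icc_right ?_).trans hrest) ?_
    · have := hle_ak _ (mem_image_of_mem a (mem_range.mpr (by omega : i + 1 < k + 1)))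
      omega
    · simp only [mem_image, mem_range]
      rintro _ ⟨r, hr, rfl⟩ hr_small
      have : a r < a (i + 1) := by have := hmono i (by omega); omega
      exact ⟨r, (hlt (by omega) (by omega)).mp this, rfl⟩
  · refine le_n2_of_subset_add
      ((Icc_subset_Icc_right (by omega)).trans (Icc_subset_add_image_tsub hle_ak hrest)) ?_
    simp only [mem_image, mem_range, mem_Icc]
    rintro _ ⟨_, ⟨r, hr, rfl⟩, rfl⟩ hr_large
    have : a r ≤ a k := hle_ak _ (mem_image_of_mem a (mem_range.mpr hr))
    have : a i < a r := by omega
    exact ⟨a r, ⟨r, ⟨(hlt (by omega) (by omega)).mp this, by omega⟩, rfl⟩, rfl⟩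

theorem prefix_suffix_range_bounds (k : ℕ) (a : ℕ → ℕ)
    (h0 : a 0 = 0) (hmono : ∀ m < k, a m < a (m + 1))
    (hrest : Finset.Icc 0 (2 * a k) ⊆
      ((Finset.range (k + 1)).image a) + ((Finset.range (k + 1)).image a))
    (i : ℕ) (hi : 0 < i) (hik : i < k - 1) :
    a (i + 1) - 1 ≤ n2 ((Finset.range (i + 1)).image a) ∧
    (a k - a i) - 1 ≤ n2 (((Finset.Icc (i + 1) k).image a).image (fun x => a k - x)) :=
  prefix_suffix_range_bounds_general k a hmono hrest i hik
end

section
/- Let n₂(k) denote the maximal range of an additive 2-basis with k nonzero elements, and n₂*(k) the maximal range among restricted bases. Then for any integer r > 1, n₂*(2r) ≤ 4·n₂(r−1) + 4. -/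
open Pointwise

/-- `IsBasisRange k n` : there is an additive 2-basis `{0 = a₀ < ⋯ < a_k}`
of nonnegative integers whose sumset covers `[0, n]`. -/
def IsBasisRange (k n : ℕ) : Prop :=
  ∃ a : ℕ → ℕ, a 0 = 0 ∧ (∀ m < k, a m < a (m + 1)) ∧
    Finset.Icc 0 n ⊆ ((Finset.range (k + 1)).image a) + ((Finset.range (k + 1)).image a)

/-- `n2max k` is the maximal range of an additive 2-basis with `k` nonzero elements. -/
noncomputable def n2max (k : ℕ) : ℕ := sSup {n | IsBasisRange k n}

/-- `IsRestrictedBasisRange k n` : there is a restricted basis of length `k`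
with range `n = 2 a_k`. -/
def IsRestrictedBasisRange (k n : ℕ) : Prop :=
  ∃ a : ℕ → ℕ, a 0 = 0 ∧ (∀ m < k, a m < a (m + 1)) ∧
    Finset.Icc 0 n ⊆ ((Finset.range (k + 1)).image a) + ((Finset.range (k + 1)).image a) ∧
    n = 2 * a k

/-- `n2star k` is the maximal range among restricted bases of length `k`. -/
noncomputable def n2star (k : ℕ) : ℕ := sSup {n | IsRestrictedBasisRange k n}

open Finset

/-
If `0 = a₀ < ⋯ < a_{2r}` is a restricted basis, every `x < a_r` in `[0, 2a_{2r}]` is a sum of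
two elements `a_i ≤ x`, hence of two among `a₀, …, a_{r-1}`: so `a_r - 1 ≤ n₂(r-1)`. The
reflected basis `a_{2r} - a_{2r-i}` is again a restricted basis of the same range, and the same
argument gives `a_{2r} - a_r - 1 ≤ n₂(r-1)`. Adding, `2a_{2r} ≤ 4n₂(r-1) + 4`.
-/

lemma bddAbove_setOf_isBasisRange (k : ℕ) : BddAbove {n | IsBasisRange k n} := by
  refine ⟨(k + 1) * (k + 1), fun n ⟨a, _, _, hcover⟩ => ?_⟩
  have hcard : #((range (k + 1)).image a) ≤ k + 1 := card_image_le.trans (card_range _).le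
  have : n + 1 ≤ (k + 1) * (k + 1) :=
    calc n + 1 = #(Icc 0 n) := by simp
      _ ≤ #((range (k + 1)).image a + (range (k + 1)).image a) := card_le_card hcover
      _ ≤ _ := card_add_le
      _ ≤ (k + 1) * (k + 1) := Nat.mul_le_mul hcard hcard
  omega

lemma IsBasisRange.le_n2max {k n : ℕ} (h : IsBasisRange k n) : n ≤ n2max k :=
  le_csSup (bddAbove_setOf_isBasisRange k) h

section

variable {a : ℕ → ℕ} {k : ℕ}

lemma mem_image_add_image_of_lt (ha : StrictMonoOn a (Set.Iic k)) {j x : ℕ} (hj : j ≤ k)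
    (hx : x ∈ (range (k + 1)).image a + (range (k + 1)).image a) (hxj : x < a j) :
    x ∈ (range j).image a + (range j).image a := by
  obtain ⟨_, hu, _, hv, rfl⟩ := mem_add.1 hx
  obtain ⟨i, hi, rfl⟩ := mem_image.1 hu
  obtain ⟨i', hi', rfl⟩ := mem_image.1 hv
  have index_lt {m : ℕ} (hm : m ∈ range (k + 1)) (hlt : a m < a j) : m ∈ range j := by
    rw [mem_range] at hm ⊢
    exact (ha.lt_iff_lt (Set.mem_Iic.2 (by omega)) (Set.mem_Iic.2 hj)).1 hlt
  exact add_mem_add (mem_image_of_mem a (index_lt hi (by omega)))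
    (mem_image_of_mem a (index_lt hi' (by omega)))

lemma isBasisRange_of_prefix (h0 : a 0 = 0) (ha : StrictMonoOn a (Set.Iic k)) {n j : ℕ}
    (hcover : Icc 0 n ⊆ (range (k + 1)).image a + (range (k + 1)).image a)
    (hj : j < k) (hjn : a (j + 1) ≤ n + 1) : IsBasisRange j (a (j + 1) - 1) := by
  refine ⟨a, h0, fun m hm => ha (Set.mem_Iic.2 (by omega)) (Set.mem_Iic.2 (by omega))
    (Nat.lt_succ_self m), fun x hx => ?_⟩
  have hpos : 0 < a (j + 1) := h0 ▸ ha (Set.mem_Iic.2 (Nat.zero_le k)) (Set.mem_Iic.2 hj)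
    (Nat.succ_pos j)
  rw [mem_Icc] at hx
  exact mem_image_add_image_of_lt ha hj (hcover (mem_Icc.2 ⟨Nat.zero_le x, by omega⟩)) (by omega)

lemma strictMonoOn_reflect (ha : StrictMonoOn a (Set.Iic k)) :
    StrictMonoOn (fun i => a k - a (k - i)) (Set.Iic k) := by
  intro i hi i' hi' hii'
  rw [Set.mem_Iic] at hi hi'
  have hlt : a (k - i') < a (k - i) :=
    ha (Set.mem_Iic.2 (Nat.sub_le k i')) (Set.mem_Iic.2 (Nat.sub_le k i)) (by omega)
  have hle : a (k - i) ≤ a k := ha.monotoneOn (Set.mem_Iic.2 (Nat.sub_le k i))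
    Set.self_mem_Iic (Nat.sub_le k i)
  dsimp only
  omega

/-- The sumset of `a k - a (k - i)` is the reflection `x ↦ 2 a k - x` of that of `a`. -/
lemma sumset_cover_reflect (ha : MonotoneOn a (Set.Iic k))
    (hcover : Icc 0 (2 * a k) ⊆ (range (k + 1)).image a + (range (k + 1)).image a) :
    Icc 0 (2 * a k) ⊆ (range (k + 1)).image (fun i => a k - a (k - i)) +
      (range (k + 1)).image (fun i => a k - a (k - i)) := by
  intro y hy
  rw [mem_Icc] at hy
  obtain ⟨_, hu, _, hv, hsum⟩ := mem_add.1 (hcover (mem_Icc.2 ⟨Nat.zero_le _, Nat.sub_le _ y⟩))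
  obtain ⟨i, hi, rfl⟩ := mem_image.1 hu
  obtain ⟨i', hi', rfl⟩ := mem_image.1 hv
  rw [mem_range] at hi hi'
  have reflect_mem {m : ℕ} (hm : m < k + 1) :
      a k - a m ∈ (range (k + 1)).image (fun i => a k - a (k - i)) :=
    mem_image.2 ⟨k - m, mem_range.2 (by omega), by rw [Nat.sub_sub_self (by omega)]⟩
  have hle {m : ℕ} (hm : m < k + 1) : a m ≤ a k :=
    ha (Set.mem_Iic.2 (by omega)) Set.self_mem_Iic (by omega)
  convert add_mem_add (reflect_mem hi) (reflect_mem hi') using 1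
  have := hle hi
  have := hle hi'
  omega

end

theorem n2star_even_upper_bound_general (r : ℕ) :
    n2star (2 * r) ≤ 4 * n2max (r - 1) + 4 := by
  refine csSup_le' fun n ⟨a, h0, hstep, hcover, hn⟩ => ?_
  obtain _ | s := r
  · simp [hn, h0]
  set K := 2 * (s + 1)
  have ha : StrictMonoOn a (Set.Iic K) := strictMonoOn_Iic_of_lt_succ hstep
  subst hn
  have hsK : a (s + 1) ≤ a K :=
    ha.monotoneOn (Set.mem_Iic.2 (by omega)) Set.self_mem_Iic (by omega)
  have hlow : a (s + 1) - 1 ≤ n2max s :=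
    (isBasisRange_of_prefix h0 ha hcover (by omega) (by omega)).le_n2max
  have hhigh : a K - a (K - (s + 1)) - 1 ≤ n2max s :=
    (isBasisRange_of_prefix (by simp) (strictMonoOn_reflect ha)
      (by simpa using sumset_cover_reflect ha.monotoneOn hcover) (by omega) (by omega)).le_n2max
  rw [show K - (s + 1) = s + 1 by omega] at hhigh
  simp only [Nat.add_sub_cancel]
  omega

theorem n2star_even_upper_bound (r : ℕ) (hr : 1 < r) :
    n2star (2 * r) ≤ 4 * n2max (r - 1) + 4 :=
  n2star_even_upper_bound_general r
end

section
/- Let A_k be a restricted basis with range n = 2a_k of length k ≥ 3, let 0 < i < k−1 and j = k−1−i. If every basis of length j−1 has range at most M, then the prefix A_i satisfies n₂(A_i) ≥ a_k − M − 2. -/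
/-!
Let `r = n2 A_i`. Some `s ≤ r + 1` is missing from `A_i + A_i`, yet `s` is a sum of two elements
of `A_k`, so one summand lies beyond `A_i` and `a_{i+1} ≤ r + 1`. Now reflect about `a_k`: every
`u < a_k - a_{i+1}` gives `2 a_k - u = a_p + a_q` with both `a_p, a_q > a_{i+1}`, so `u` is a sum
of two elements of `a_k - {a_{i+2}, …, a_k}`, a basis of length `j - 1`. Hence
`a_k - r - 2 ≤ a_k - a_{i+1} - 1 ≤ M`.
-/

open Pointwise

open Finset

lemma bddAbove_setOf_Icc_subset_add (S : Finset ℕ) : BddAbove {m | Icc 0 m ⊆ S + S} := by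
  refine ⟨2 * S.sup id, fun m hm => ?_⟩
  obtain ⟨x, hx, y, hy, rfl⟩ := mem_add.mp (hm (mem_Icc.mpr ⟨m.zero_le, le_rfl⟩))
  have hx' : x ≤ S.sup id := le_sup (f := id) hx
  have hy' : y ≤ S.sup id := le_sup (f := id) hy
  omega

lemma exists_le_n2_add_one_notMem_add (S : Finset ℕ) : ∃ s ≤ n2 S + 1, s ∉ S + S := by
  by_contra! h
  have := le_n2 (S := S) (m := n2 S + 1) fun s hs => h s (mem_Icc.mp hs).2
  omega

section Prefix

variable {a : ℕ → ℕ} {k : ℕ}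

lemma apply_succ_le_of_mem_add_of_notMem_prefix_add (ha : MonotoneOn a (Set.Iic k)) {i s : ℕ}
    (hs : s ∈ (range (k + 1)).image a + (range (k + 1)).image a)
    (hs' : s ∉ (range (i + 1)).image a + (range (i + 1)).image a) :
    a (i + 1) ≤ s := by
  obtain ⟨_, hx, _, hy, rfl⟩ := mem_add.mp hs
  obtain ⟨p, hp, rfl⟩ := mem_image.mp hx
  obtain ⟨q, hq, rfl⟩ := mem_image.mp hy
  rw [mem_range] at hp hq
  by_cases hpq : p ≤ i ∧ q ≤ i
  · exact absurd (add_mem_add (mem_image_of_mem a (mem_range.mpr (by omega)))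
      (mem_image_of_mem a (mem_range.mpr (by omega)))) hs'
  · rcases not_and_or.mp hpq with hp' | hq'
    · have := ha (show i + 1 ≤ k by omega) (show p ≤ k by omega) (show i + 1 ≤ p by omega)
      omega
    · have := ha (show i + 1 ≤ k by omega) (show q ≤ k by omega) (show i + 1 ≤ q by omega)
      omega

lemma apply_succ_le_n2_prefix_add_one (ha : MonotoneOn a (Set.Iic k)) {i N : ℕ}
    (hcov : Icc 0 N ⊆ (range (k + 1)).image a + (range (k + 1)).image a)
    (hN : n2 ((range (i + 1)).image a) < N) :
    a (i + 1) ≤ n2 ((range (i + 1)).image a) + 1 := by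
  obtain ⟨s, hs, hs'⟩ := exists_le_n2_add_one_notMem_add ((range (i + 1)).image a)
  have hs_mem := hcov (mem_Icc.mpr ⟨s.zero_le, by omega⟩)
  exact (apply_succ_le_of_mem_add_of_notMem_prefix_add ha hs_mem hs').trans hs

end Prefix

section Reflection

/-- The elements `a k - a (k - m)` for `m < j` are the last `j` elements of `{a 0, …, a k}`
reflected about `a k`, in increasing order. -/
def reflectBasis (a : ℕ → ℕ) (k m : ℕ) : ℕ := a k - a (k - m)

variable {a : ℕ → ℕ} {k : ℕ}

@[simp]
lemma reflectBasis_zero : reflectBasis a k 0 = 0 := by simp [reflectBasis]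

lemma reflectBasis_lt_succ (ha : StrictMonoOn a (Set.Iic k)) {m : ℕ} (hm : m < k) :
    reflectBasis a k m < reflectBasis a k (m + 1) := by
  have h₁ := ha (show k - (m + 1) ≤ k by omega) (show k - m ≤ k by omega)
    (show k - (m + 1) < k - m by omega)
  have h₂ := ha.monotoneOn (show k - m ≤ k by omega) Set.self_mem_Iic (Nat.sub_le k m)
  simp only [reflectBasis]
  omega

lemma Icc_subset_reflectBasis_add (ha : MonotoneOn a (Set.Iic k))
    (hrest : Icc 0 (2 * a k) ⊆ (range (k + 1)).image a + (range (k + 1)).image a)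
    {i m : ℕ} (hik : i < k) (hm : m + a (i + 1) < a k) :
    Icc 0 m ⊆ (range (k - 1 - i)).image (reflectBasis a k) +
      (range (k - 1 - i)).image (reflectBasis a k) := by
  intro u hu
  have hu : u ≤ m := (mem_Icc.mp hu).2
  obtain ⟨_, hx, _, hy, hxy⟩ :=
    mem_add.mp (hrest (mem_Icc.mpr ⟨(2 * a k - u).zero_le, Nat.sub_le _ _⟩))
  obtain ⟨p, hp, rfl⟩ := mem_image.mp hx
  obtain ⟨q, hq, rfl⟩ := mem_image.mp hy
  rw [mem_range] at hp hq
  have hpk := ha (show p ≤ k by omega) Set.self_mem_Iic (show p ≤ k by omega)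
  have hqk := ha (show q ≤ k by omega) Set.self_mem_Iic (show q ≤ k by omega)
  -- a summand of index `≤ i + 1` is `≤ a (i + 1)`, forcing the other one above `a k`
  have hfar : ∀ t ≤ k, a (i + 1) < a t → i + 2 ≤ t := fun t ht hlt => by
    by_contra! h
    have := ha ht (show i + 1 ≤ k by omega) (show t ≤ i + 1 by omega)
    omega
  have hp2 := hfar p (by omega) (by omega)
  have hq2 := hfar q (by omega) (by omega)
  have hmem : ∀ t, i + 2 ≤ t → t ≤ k →
      a k - a t ∈ (range (k - 1 - i)).image (reflectBasis a k) := fun t ht₁ ht₂ =>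
    mem_image.mpr ⟨k - t, mem_range.mpr (by omega),
      by simp only [reflectBasis, Nat.sub_sub_self ht₂]⟩
  convert add_mem_add (hmem p hp2 (by omega)) (hmem q hq2 (by omega)) using 1
  omega

end Reflection

theorem prefix_range_lower_bound_general (k : ℕ) (a : ℕ → ℕ)
    (hmono : ∀ m < k, a m < a (m + 1))
    (hrest : Finset.Icc 0 (2 * a k) ⊆
      ((Finset.range (k + 1)).image a) + ((Finset.range (k + 1)).image a))
    (i j : ℕ) (hik : i < k - 1) (hj : j = k - 1 - i)
    (M : ℕ)
    (hM : ∀ b : ℕ → ℕ, b 0 = 0 → (∀ m < j - 1, b m < b (m + 1)) →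
      n2 ((Finset.range j).image b) ≤ M) :
    a k - M - 2 ≤ n2 ((Finset.range (i + 1)).image a) := by
  set r := n2 ((range (i + 1)).image a)
  have ha : StrictMonoOn a (Set.Iic k) := strictMonoOn_Iic_of_lt_succ hmono
  rcases le_or_gt (a k) (r + 2) with hsmall | hlarge
  · omega
  have hnext : a (i + 1) ≤ r + 1 :=
    apply_succ_le_n2_prefix_add_one ha.monotoneOn hrest (by omega)
  have hcov := Icc_subset_reflectBasis_add ha.monotoneOn hrest (i := i) (m := a k - r - 2)
    (by omega) (by omega)
  have hB : a k - r - 2 ≤ M := by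
    subst hj
    exact (le_n2 hcov).trans
      (hM _ reflectBasis_zero fun m hm => reflectBasis_lt_succ ha (by omega))
  omega

theorem prefix_range_lower_bound (k : ℕ) (hk : 3 ≤ k) (a : ℕ → ℕ)
    (h0 : a 0 = 0) (hmono : ∀ m < k, a m < a (m + 1))
    (hrest : Finset.Icc 0 (2 * a k) ⊆
      ((Finset.range (k + 1)).image a) + ((Finset.range (k + 1)).image a))
    (i j : ℕ) (hi : 0 < i) (hik : i < k - 1) (hj : j = k - 1 - i)
    (M : ℕ)
    (hM : ∀ b : ℕ → ℕ, b 0 = 0 → (∀ m < j - 1, b m < b (m + 1)) →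
      n2 ((Finset.range j).image b) ≤ M) :
    a k - M - 2 ≤ n2 ((Finset.range (i + 1)).image a) :=
  prefix_range_lower_bound_general k a hmono hrest i j hik hj M hM
end
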